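/- arXiv:2203.13137 — 4 statements merged into one kernel-verified Lean document; each statement's English description precedes it below -/
import Mathlib

section
/- Let X = (X_1,...,X_n) be a vector of independent random elements with values in a measurable space, and let X' be an independent copy of X. For A ⊆ [n] define X^A by replacing X_i with X_i' for i ∈ A. Then for any square-integrable real-valued functions g, h of X, Cov(g(X), h(X)) = (1/2) ∑_{A ⊊ [n]} k_{n,A} ∑_{j ∉ A} E[(g(X) − g(X^j)) (h(X^A) − h(X^{A ∪ {j}}))], where k_{n,A} = 1/(C(n,|A|)(n−|A|)). -/
/-!
Write `(X, X')` as a single random element `Z` of `ι ⊕ ι → 𝒳` with law `⨂ (ν ⊕ ν)`, so that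
`X^A = resample A Z`. Exchanging the coordinates `inl i` and `inr i` for `i ∈ C` preserves this
law and turns `resample A Z` into `resample (A ∆ C) Z`. With `F A = E[g(X) h(X^A)]`, the exchange
at `C = {j}` gives `E[Δ_j g(X) · Δ_j h(X^A)] = 2 (F A - F (A ∪ {j}))` for `j ∉ A`, while
`F ∅ - F [n]` is the covariance because `X^[n] = X'` is independent of `X`. Finally the weights
`k_{n,A}` make the sum over `A` telescope along `|A|`: the subsets of size `m` contribute
`T m - T (m + 1)`, where `T m` is the average of `F` over the `m`-subsets.
-/

open Finset MeasureTheory ProbabilityTheory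
open scoped symmDiff ENNReal

section Telescope

variable {ι : Type*} [Fintype ι] [DecidableEq ι]

theorem sum_powersetCard_sum_compl_insert {M : Type*} [AddCommMonoid M] (F : Finset ι → M)
    (m : ℕ) :
    ∑ A ∈ powersetCard m univ, ∑ j ∈ Aᶜ, F (insert j A) =
      (m + 1) • ∑ B ∈ powersetCard (m + 1) univ, F B := by
  have hcard : ∀ B ∈ powersetCard (m + 1) (univ : Finset ι), (m + 1) • F B = ∑ _j ∈ B, F B :=
    fun B hB => by rw [sum_const, (mem_powersetCard.1 hB).2]
  rw [smul_sum, sum_congr rfl hcard, sum_sigma', sum_sigma']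
  refine sum_nbij' (fun p => ⟨insert p.2 p.1, p.2⟩) (fun p => ⟨p.1.erase p.2, p.2⟩)
    ?_ ?_ ?_ ?_ fun _ _ => rfl
  · rintro ⟨A, j⟩ hAj
    simp only [mem_sigma, mem_powersetCard, mem_compl] at hAj ⊢
    exact ⟨⟨subset_univ _, by rw [card_insert_of_notMem hAj.2, hAj.1.2]⟩, mem_insert_self _ _⟩
  · rintro ⟨B, j⟩ hBj
    simp only [mem_sigma, mem_powersetCard, mem_compl] at hBj ⊢
    exact ⟨⟨subset_univ _, by rw [card_erase_of_mem hBj.2, hBj.1.2, Nat.add_sub_cancel]⟩,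
      notMem_erase _ _⟩
  · rintro ⟨A, j⟩ hAj
    simp only [mem_sigma, mem_compl] at hAj
    simp [erase_insert hAj.2]
  · rintro ⟨B, j⟩ hBj
    simp only [mem_sigma] at hBj
    simp [insert_erase hBj.2]

theorem sum_powersetCard_weighted_sum_sub_insert (F : Finset ι → ℝ) {m : ℕ}
    (hm : m < Fintype.card ι) :
    ∑ A ∈ powersetCard m univ, 1 / (((Fintype.card ι).choose #A : ℝ) * (Fintype.card ι - #A)) *
        ∑ j ∈ Aᶜ, (F A - F (insert j A)) =
      (∑ A ∈ powersetCard m univ, F A) / (Fintype.card ι).choose m -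
        (∑ B ∈ powersetCard (m + 1) univ, F B) / (Fintype.card ι).choose (m + 1) := by
  set n := Fintype.card ι
  have hsummand : ∀ A ∈ powersetCard m (univ : Finset ι),
      1 / ((n.choose #A : ℝ) * (n - #A)) * ∑ j ∈ Aᶜ, (F A - F (insert j A)) =
        F A / n.choose m - (∑ j ∈ Aᶜ, F (insert j A)) / (n.choose m * (n - m)) := by
    intro A hA
    have hAm : #A = m := (mem_powersetCard.1 hA).2
    have hnm : (n : ℝ) - m ≠ 0 := sub_ne_zero.2 (by exact_mod_cast hm.ne')
    rw [sum_sub_distrib, sum_const, card_compl, hAm, nsmul_eq_mul, Nat.cast_sub hm.le]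
    field_simp
  have hchoose : (n.choose m : ℝ) * (n - m) = n.choose (m + 1) * (m + 1) := by
    rw [← Nat.cast_sub hm.le]; exact_mod_cast (Nat.choose_succ_right_eq n m).symm
  rw [sum_congr rfl hsummand, sum_sub_distrib, ← sum_div, ← sum_div,
    sum_powersetCard_sum_compl_insert, nsmul_eq_mul, hchoose]
  have hm₁ : (m + 1 : ℝ) ≠ 0 := by positivity
  push_cast
  field_simp

theorem sum_filter_ne_univ_weighted_sum_sub_insert (F : Finset ι → ℝ) :
    ∑ A ∈ univ.powerset.filter (· ≠ univ),
        1 / (((Fintype.card ι).choose #A : ℝ) * (Fintype.card ι - #A)) *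
          ∑ j ∈ Aᶜ, (F A - F (insert j A)) = F ∅ - F univ := by
  have hlevel (m : ℕ) (hm : m ∈ range (Fintype.card ι)) :=
    sum_powersetCard_weighted_sum_sub_insert F (mem_range.1 hm)
  have htop : powersetCard (Fintype.card ι) (univ : Finset ι) = {univ} := by
    simpa using powersetCard_self (univ : Finset ι)
  rw [sum_filter_of_ne fun A _ hA hAuniv => by simp [hAuniv] at hA, sum_powerset, card_univ,
    sum_range_succ, sum_congr rfl hlevel, sum_range_sub' (f := fun m =>
      (∑ A ∈ powersetCard m univ, F A) / (Fintype.card ι).choose m), htop]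
  simp

end Telescope

theorem MeasureTheory.MeasurePreserving.identDistrib_id {α β : Type*} [MeasurableSpace α]
    [MeasurableSpace β] {μ : Measure α} {ν : Measure β} {f : α → β}
    (hf : MeasurePreserving f μ ν) : IdentDistrib f id μ ν :=
  ⟨hf.measurable.aemeasurable, aemeasurable_id, by rw [hf.map_eq, Measure.map_id]⟩

theorem integral_sub_mul_sub {α : Type*} [MeasurableSpace α] {μ : Measure α}
    {f₁ f₂ g₁ g₂ : α → ℝ} (hf₁ : MemLp f₁ 2 μ) (hf₂ : MemLp f₂ 2 μ) (hg₁ : MemLp g₁ 2 μ)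
    (hg₂ : MemLp g₂ 2 μ) :
    ∫ x, (f₁ x - f₂ x) * (g₁ x - g₂ x) ∂μ =
      (∫ x, f₁ x * g₁ x ∂μ) - (∫ x, f₁ x * g₂ x ∂μ) - (∫ x, f₂ x * g₁ x ∂μ) +
        ∫ x, f₂ x * g₂ x ∂μ := by
  have h₁₁ := hf₁.integrable_mul hg₁
  have h₁₂ := hf₁.integrable_mul hg₂
  have h₂₁ := hf₂.integrable_mul hg₁
  have h₂₂ := hf₂.integrable_mul hg₂
  have hexpand : (fun x => (f₁ x - f₂ x) * (g₁ x - g₂ x)) =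
      f₁ * g₁ - f₁ * g₂ - (f₂ * g₁ - f₂ * g₂) := by
    funext x; simp only [Pi.sub_apply, Pi.mul_apply]; ring
  rw [hexpand, integral_sub' (h₁₁.sub h₁₂) (h₂₁.sub h₂₂), integral_sub' h₁₁ h₁₂,
    integral_sub' h₂₁ h₂₂]
  simp only [Pi.mul_apply]
  ring

instance {ι κ 𝒳 : Type*} [MeasurableSpace 𝒳] {μ : ι → Measure 𝒳} {ν : κ → Measure 𝒳}
    [∀ i, SigmaFinite (μ i)] [∀ k, SigmaFinite (ν k)] (s : ι ⊕ κ) :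
    SigmaFinite (Sum.elim μ ν s) := by
  rcases s with i | k
  exacts [inferInstanceAs (SigmaFinite (μ i)), inferInstanceAs (SigmaFinite (ν k))]

section Resampling

variable {ι 𝒳 : Type*} [DecidableEq ι]

def swapOn (B : Finset ι) : Equiv.Perm (ι ⊕ ι) :=
  Function.Involutive.toPerm
    (Sum.elim (fun i => if i ∈ B then .inr i else .inl i)
      fun i => if i ∈ B then .inl i else .inr i)
    (by rintro (i | i) <;> by_cases hi : i ∈ B <;> simp [hi])

@[simp]
theorem swapOn_inl (B : Finset ι) (i : ι) :
    swapOn B (.inl i) = if i ∈ B then .inr i else .inl i := rfl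

@[simp]
theorem swapOn_inr (B : Finset ι) (i : ι) :
    swapOn B (.inr i) = if i ∈ B then .inl i else .inr i := rfl

@[simp]
theorem swapOn_symm (B : Finset ι) : (swapOn B).symm = swapOn B :=
  Function.Involutive.toPerm_symm _

def resample (A : Finset ι) (y : ι ⊕ ι → 𝒳) : ι → 𝒳 :=
  fun i => if i ∈ A then y (.inr i) else y (.inl i)

theorem Finset.empty_symmDiff (s : Finset ι) : ∅ ∆ s = s :=
  bot_symmDiff s

theorem Finset.symmDiff_singleton_of_notMem {A : Finset ι} {j : ι} (hj : j ∉ A) :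
    A ∆ {j} = insert j A := by
  ext i; by_cases hij : i = j <;> simp [mem_symmDiff, hij, hj]

theorem Finset.insert_symmDiff_singleton {A : Finset ι} {j : ι} (hj : j ∉ A) :
    (insert j A) ∆ {j} = A := by
  rw [← symmDiff_singleton_of_notMem hj, symmDiff_symmDiff_cancel_right]

theorem sum_elim_comp_swapOn {α : Type*} (f : ι → α) (B : Finset ι) :
    Sum.elim f f ∘ swapOn B = Sum.elim f f := by
  funext s; rcases s with i | i <;> by_cases hi : i ∈ B <;> simp [hi]

theorem resample_comp_swapOn (A B : Finset ι) (y : ι ⊕ ι → 𝒳) :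
    resample A (fun s => y (swapOn B s)) = resample (A ∆ B) y := by
  funext i
  by_cases hA : i ∈ A <;> by_cases hB : i ∈ B <;> simp [resample, hA, hB, mem_symmDiff]

theorem resample_empty (y : ι ⊕ ι → 𝒳) : resample ∅ y = fun i => y (.inl i) := by
  funext i; simp [resample]

theorem resample_univ [Fintype ι] (y : ι ⊕ ι → 𝒳) :
    resample univ y = fun i => y (.inr i) := by
  funext i; simp [resample]

variable [MeasurableSpace 𝒳]

@[fun_prop]
theorem measurable_resample (A : Finset ι) : Measurable (resample (𝒳 := 𝒳) A) :=
  measurable_pi_lambda _ fun i => by unfold resample; split <;> fun_prop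

variable [Fintype ι] {Ω : Type*} [MeasurableSpace Ω] {μ : Measure Ω} {Z : Ω → ι ⊕ ι → 𝒳}

section SigmaFinite

variable {ν : ι → Measure 𝒳} [∀ i, SigmaFinite (ν i)]

theorem measurePreserving_comp_swapOn (B : Finset ι) :
    MeasurePreserving (fun (y : ι ⊕ ι → 𝒳) s => y (swapOn B s)) (Measure.pi (Sum.elim ν ν))
      (Measure.pi (Sum.elim ν ν)) := by
  have h := measurePreserving_arrowCongr' (Sum.elim ν ν) (Sum.elim ν ν) (swapOn B).symm
    (MeasurableEquiv.refl 𝒳) fun s => by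
      rw [swapOn_symm, ← Function.comp_apply (f := Sum.elim ν ν), sum_elim_comp_swapOn]
      exact MeasurePreserving.id _
  convert h using 1
  funext y s
  simp [MeasurableEquiv.arrowCongr', Equiv.arrowCongr']

theorem identDistrib_comp_swapOn (hZ : MeasurePreserving Z μ (Measure.pi (Sum.elim ν ν)))
    (B : Finset ι) : IdentDistrib (fun ω s => Z ω (swapOn B s)) Z μ μ :=
  ((measurePreserving_comp_swapOn B).comp hZ).identDistrib_id.trans hZ.identDistrib_id.symm

theorem memLp_comp_resample (hZ : MeasurePreserving Z μ (Measure.pi (Sum.elim ν ν)))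
    {g : (ι → 𝒳) → ℝ} (hg : Measurable g) {p : ℝ≥0∞}
    (hg2 : MemLp (fun ω => g (resample ∅ (Z ω))) p μ) (A : Finset ι) :
    MemLp (fun ω => g (resample A (Z ω))) p μ := by
  have := (identDistrib_comp_swapOn hZ A).comp (hg.comp (measurable_resample ∅))
  simp only [Function.comp_def, resample_comp_swapOn, empty_symmDiff] at this
  exact this.memLp_iff.2 hg2

theorem integral_mul_resample_symmDiff (hZ : MeasurePreserving Z μ (Measure.pi (Sum.elim ν ν)))
    {g h : (ι → 𝒳) → ℝ} (hg : Measurable g) (hh : Measurable h) (A B C : Finset ι) :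
    ∫ ω, g (resample (A ∆ C) (Z ω)) * h (resample (B ∆ C) (Z ω)) ∂μ =
      ∫ ω, g (resample A (Z ω)) * h (resample B (Z ω)) ∂μ := by
  have hφ : Measurable fun y => g (resample A y) * h (resample B y) := by fun_prop
  simpa only [Function.comp_def, resample_comp_swapOn]
    using ((identDistrib_comp_swapOn hZ C).comp hφ).integral_eq

theorem integral_sub_mul_sub_resample_insert
    (hZ : MeasurePreserving Z μ (Measure.pi (Sum.elim ν ν)))
    {g h : (ι → 𝒳) → ℝ} (hg : Measurable g) (hh : Measurable h)
    (hg2 : MemLp (fun ω => g (resample ∅ (Z ω))) 2 μ)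
    (hh2 : MemLp (fun ω => h (resample ∅ (Z ω))) 2 μ) {A : Finset ι} {j : ι} (hj : j ∉ A) :
    ∫ ω, (g (resample ∅ (Z ω)) - g (resample {j} (Z ω))) *
        (h (resample A (Z ω)) - h (resample (insert j A) (Z ω))) ∂μ =
      2 * (∫ ω, g (resample ∅ (Z ω)) * h (resample A (Z ω)) ∂μ -
        ∫ ω, g (resample ∅ (Z ω)) * h (resample (insert j A) (Z ω)) ∂μ) := by
  have hswap₁ := integral_mul_resample_symmDiff hZ hg hh ∅ A {j}
  have hswap₂ := integral_mul_resample_symmDiff hZ hg hh ∅ (insert j A) {j}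
  rw [empty_symmDiff, symmDiff_singleton_of_notMem hj] at hswap₁
  rw [empty_symmDiff, insert_symmDiff_singleton hj] at hswap₂
  rw [integral_sub_mul_sub (memLp_comp_resample hZ hg hg2 _) (memLp_comp_resample hZ hg hg2 _)
    (memLp_comp_resample hZ hh hh2 _) (memLp_comp_resample hZ hh hh2 _), hswap₁, hswap₂]
  ring

end SigmaFinite

variable {ν : ι → Measure 𝒳} [∀ i, IsProbabilityMeasure (ν i)]

theorem integral_resample_empty_mul_resample_univ
    (hZ : MeasurePreserving Z μ (Measure.pi (Sum.elim ν ν)))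
    {g h : (ι → 𝒳) → ℝ} (hg : Measurable g) (hh : Measurable h) :
    ∫ ω, g (resample ∅ (Z ω)) * h (resample univ (Z ω)) ∂μ =
      (∫ ω, g (resample ∅ (Z ω)) ∂μ) * ∫ ω, h (resample ∅ (Z ω)) ∂μ := by
  have hpair : MeasurePreserving (fun ω => (resample ∅ (Z ω), resample univ (Z ω))) μ
      ((Measure.pi ν).prod (Measure.pi ν)) := by
    convert (measurePreserving_sumPiEquivProdPi (Sum.elim ν ν)).comp hZ using 1
    · funext ω
      rw [resample_empty, resample_univ]
      rfl
    · rfl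
  have hfst := (measurePreserving_fst.comp hpair).identDistrib_id
  calc ∫ ω, g (resample ∅ (Z ω)) * h (resample univ (Z ω)) ∂μ
      = ∫ p, g p.1 * h p.2 ∂(Measure.pi ν).prod (Measure.pi ν) :=
        (hpair.identDistrib_id.comp (show Measurable fun p : (ι → 𝒳) × (ι → 𝒳) => g p.1 * h p.2
          by fun_prop)).integral_eq
    _ = (∫ x, g x ∂Measure.pi ν) * ∫ x, h x ∂Measure.pi ν := integral_prod_mul g h
    _ = _ := by congr 1 <;> exact (hfst.comp ‹_›).integral_eq.symm

theorem integral_mul_sub_mul_integral_eq_resampling_sum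
    (hZ : MeasurePreserving Z μ (Measure.pi (Sum.elim ν ν)))
    {g h : (ι → 𝒳) → ℝ} (hg : Measurable g) (hh : Measurable h)
    (hg2 : MemLp (fun ω => g (resample ∅ (Z ω))) 2 μ)
    (hh2 : MemLp (fun ω => h (resample ∅ (Z ω))) 2 μ) :
    (∫ ω, g (resample ∅ (Z ω)) * h (resample ∅ (Z ω)) ∂μ) -
        (∫ ω, g (resample ∅ (Z ω)) ∂μ) * ∫ ω, h (resample ∅ (Z ω)) ∂μ =
      1 / 2 * ∑ A ∈ univ.powerset.filter (· ≠ univ),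
        1 / (((Fintype.card ι).choose #A : ℝ) * (Fintype.card ι - #A)) *
          ∑ j ∈ Aᶜ, ∫ ω, (g (resample ∅ (Z ω)) - g (resample {j} (Z ω))) *
            (h (resample A (Z ω)) - h (resample (insert j A) (Z ω))) ∂μ := by
  rw [← integral_resample_empty_mul_resample_univ hZ hg hh,
    ← sum_filter_ne_univ_weighted_sum_sub_insert
      fun A => ∫ ω, g (resample ∅ (Z ω)) * h (resample A (Z ω)) ∂μ, mul_sum]
  refine sum_congr rfl fun A _ => ?_
  rw [sum_congr rfl fun j hj => integral_sub_mul_sub_resample_insert hZ hg hh hg2 hh2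
    (mem_compl.1 hj), ← mul_sum]
  ring

end Resampling

/-- Resampling covariance identity: for `X = (X_1,…,X_n)` with independent coordinates and `X'` an
independent copy, and square-integrable `g, h` of `X`,
`Cov(g(X), h(X)) = (1/2) ∑_{A ⊊ [n]} k_{n,A} ∑_{j ∉ A} E[Δ_j g(X) · Δ_j h(X^A)]`,
where `X^A` replaces the coordinates in `A` by those of `X'` and
`k_{n,A} = 1/(C(n,|A|)(n−|A|))`. -/
theorem covariance_resampling_identity {Ω : Type*} {𝒳 : Type*} [MeasurableSpace Ω]
    [m𝒳 : MeasurableSpace 𝒳] {μ : Measure Ω} [IsProbabilityMeasure μ]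
    {n : ℕ} (X X' : Fin n → Ω → 𝒳)
    (hX : ∀ i, Measurable (X i)) (hX' : ∀ i, Measurable (X' i))
    (hindep : iIndepFun (Sum.elim X X') μ)
    (hid : ∀ i, IdentDistrib (X' i) (X i) μ μ)
    (g h : (Fin n → 𝒳) → ℝ) (hg : Measurable g) (hh : Measurable h)
    (hg2 : MemLp (fun ω => g (fun i => X i ω)) 2 μ)
    (hh2 : MemLp (fun ω => h (fun i => X i ω)) 2 μ)
    (XA : Finset (Fin n) → Ω → Fin n → 𝒳)
    (hXA : ∀ A ω i, XA A ω i = if i ∈ A then X' i ω else X i ω) :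
    (∫ ω, g (fun i => X i ω) * h (fun i => X i ω) ∂μ) -
        (∫ ω, g (fun i => X i ω) ∂μ) * ∫ ω, h (fun i => X i ω) ∂μ =
      (1 / 2) * ∑ A ∈ (Finset.univ : Finset (Fin n)).powerset.filter (· ≠ Finset.univ),
        (1 / ((n.choose A.card : ℝ) * (n - A.card))) *
          ∑ j ∈ Aᶜ, ∫ ω, (g (fun i => X i ω) - g (XA {j} ω)) *
            (h (XA A ω) - h (XA (insert j A) ω)) ∂μ := by
  have hmeas : ∀ s, Measurable (Sum.elim X X' s) := by rintro (i | i); exacts [hX i, hX' i]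
  set ν : Fin n → Measure 𝒳 := fun i => μ.map (X i)
  have : ∀ i, IsProbabilityMeasure (ν i) :=
    fun i => Measure.isProbabilityMeasure_map (hX i).aemeasurable
  let Z : Ω → Fin n ⊕ Fin n → 𝒳 := fun ω s => Sum.elim X X' s ω
  have hZ : MeasurePreserving Z μ (Measure.pi (Sum.elim ν ν)) := by
    refine ⟨measurable_pi_lambda _ hmeas, ?_⟩
    rw [hindep.map_fun_eq_pi_map fun s => (hmeas s).aemeasurable]
    congr 1
    funext s
    rcases s with i | i
    · rfl
    · exact (hid i).map_eq
  obtain rfl : XA = fun A ω => resample A (Z ω) := by funext A ω i; simp [hXA, resample, Z]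
  have hXvec (ω : Ω) : resample ∅ (Z ω) = fun i => X i ω := resample_empty _
  simpa only [hXvec, Fintype.card_fin] using integral_mul_sub_mul_integral_eq_resampling_sum hZ
    hg hh (by simpa only [hXvec] using hg2) (by simpa only [hXvec] using hh2)
end

section
/- For all natural numbers r, n with 1 ≤ r ≤ n, one has |1/r! − C(n,r)/n^r| ≤ 2^r / (n · (r−1)!). -/
/-!
Since `r! · C(n,r) = ∏_{i<r} (n - i)`, one has `C(n,r)/n^r = (1/r!) ∏_{i<r} (1 - i/n)`. By the
Weierstrass product inequality `1 - ∑ aᵢ ≤ ∏ (1 - aᵢ)` for `aᵢ ∈ [0,1]`, the product lies between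
`1 - ∑_{i<r} i/n = 1 - C(r,2)/n` and `1`, so the difference is at most
`C(r,2)/(n·r!) ≤ 2^r/(n·(r-1)!)`.
-/

open Finset

theorem Finset.one_sub_sum_le_prod_one_sub {ι R : Type*} [CommRing R] [PartialOrder R]
    [IsOrderedRing R] (s : Finset ι) {a : ι → R} (h0 : ∀ i ∈ s, 0 ≤ a i)
    (h1 : ∀ i ∈ s, a i ≤ 1) : 1 - ∑ i ∈ s, a i ≤ ∏ i ∈ s, (1 - a i) := by
  classical
  induction s using Finset.induction_on with
  | empty => simp
  | insert j s hj ih =>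
    rw [sum_insert hj, prod_insert hj]
    have hP : ∏ i ∈ s, (1 - a i) ≤ 1 :=
      prod_le_one (fun i hi => sub_nonneg.2 (h1 i (mem_insert_of_mem hi)))
        fun i hi => sub_le_self _ (h0 i (mem_insert_of_mem hi))
    have hS := ih (fun i hi => h0 i (mem_insert_of_mem hi)) fun i hi => h1 i (mem_insert_of_mem hi)
    have haP := mul_le_mul_of_nonneg_left hP (h0 j (mem_insert_self j s))
    linear_combination haP + hS

theorem Nat.cast_descFactorial_eq_prod_range {R : Type*} [CommRing R] (n k : ℕ) :
    (n.descFactorial k : R) = ∏ i ∈ range k, ((n : R) - i) := by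
  induction k with
  | zero => simp
  | succ k ih =>
    rw [Nat.descFactorial_succ, prod_range_succ, Nat.cast_mul, ih, mul_comm]
    obtain hkn | hnk := le_or_gt k n
    · rw [Nat.cast_sub hkn]
    · rw [← ih, Nat.descFactorial_of_lt hnk, Nat.cast_zero, zero_mul, zero_mul]

theorem Nat.cast_choose_div_pow_eq_prod_div_factorial {K : Type*} [Field K] [CharZero K]
    {n : ℕ} (hn : n ≠ 0) (r : ℕ) :
    (n.choose r : K) / (n : K) ^ r = (∏ i ∈ range r, (1 - (i : K) / n)) / r.factorial := by
  have hn' : (n : K) ≠ 0 := Nat.cast_ne_zero.2 hn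
  have hfac : (r.factorial : K) ≠ 0 := Nat.cast_ne_zero.2 r.factorial_ne_zero
  simp_rw [one_sub_div hn', prod_div_distrib, prod_const, card_range,
    ← Nat.cast_descFactorial_eq_prod_range, Nat.descFactorial_eq_factorial_mul_choose]
  field_simp
  push_cast
  ring

theorem prod_one_sub_div_mem_Icc {K : Type*} [Field K] [LinearOrder K] [IsStrictOrderedRing K]
    {n r : ℕ} (hrn : r ≤ n + 1) :
    ∏ i ∈ range r, (1 - (i : K) / n) ∈ Set.Icc (1 - (r.choose 2 : K) / n) 1 := by
  have h0 : ∀ i ∈ range r, 0 ≤ (i : K) / n := fun i _ => by positivity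
  have h1 : ∀ i ∈ range r, (i : K) / n ≤ 1 := fun i hi =>
    div_le_one_of_le₀ (by exact_mod_cast Nat.le_of_lt_succ ((mem_range.1 hi).trans_le hrn))
      n.cast_nonneg
  have hgauss : ∑ i ∈ range r, (i : K) / n = r.choose 2 / n := by
    rw [← sum_div, Nat.choose_two_right, ← sum_range_id, Nat.cast_sum]
  refine ⟨hgauss ▸ one_sub_sum_le_prod_one_sub (range r) h0 h1, ?_⟩
  exact prod_le_one (fun i hi => sub_nonneg.2 (h1 i hi)) fun i hi => sub_le_self _ (h0 i hi)

theorem abs_one_div_factorial_sub_choose_div_pow_le_general (r n : ℕ) (hrn : r ≤ n) :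
    |1 / (r.factorial : ℝ) - (n.choose r : ℝ) / (n : ℝ) ^ r| ≤
      2 ^ r / ((n : ℝ) * ((r - 1).factorial : ℝ)) := by
  obtain rfl | hn := eq_or_ne n 0
  · obtain rfl := Nat.le_zero.1 hrn
    simp
  obtain ⟨hlower, hupper⟩ := prod_one_sub_div_mem_Icc (K := ℝ) (hrn.trans n.le_succ)
  rw [Nat.cast_choose_div_pow_eq_prod_div_factorial hn, ← sub_div,
    abs_of_nonneg (div_nonneg (sub_nonneg.2 hupper) (Nat.cast_nonneg _))]
  calc (1 - ∏ i ∈ range r, (1 - (i : ℝ) / n)) / r.factorial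
      ≤ (r.choose 2 / n) / r.factorial := by gcongr; linarith
    _ ≤ 2 ^ r / (n * (r - 1).factorial) := by
        rw [div_div]
        gcongr
        · exact_mod_cast r.choose_le_two_pow 2
        · exact Nat.sub_le r 1

/-- For all natural numbers `r, n` with `1 ≤ r ≤ n`,
`|1/r! − C(n,r)/n^r| ≤ 2^r / (n · (r−1)!)`. -/
theorem abs_one_div_factorial_sub_choose_div_pow_le (r n : ℕ) (hr : 1 ≤ r) (hrn : r ≤ n) :
    |1 / (r.factorial : ℝ) - (n.choose r : ℝ) / (n : ℝ) ^ r| ≤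
      2 ^ r / ((n : ℝ) * ((r - 1).factorial : ℝ)) :=
  abs_one_div_factorial_sub_choose_div_pow_le_general r n hrn
end

section
/- For real numbers A, B with B > A > 0 and B a positive integer, ∑_{k=B}^∞ A^k / k! ≤ (A·e/B)^B. -/
/-- For real `A` and a positive integer `B` with `B > A > 0`,
`∑_{k=B}^∞ A^k / k! ≤ (A·e/B)^B`. -/
theorem tsum_pow_div_factorial_tail_le (A : ℝ) (B : ℕ) (hA : 0 < A) (hAB : A < B) :
    ∑' k : ℕ, A ^ (B + k) / ((B + k).factorial : ℝ) ≤ (A * Real.exp 1 / B) ^ B := by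
  have hB : (0:ℝ) < B := lt_trans hA hAB
  have hsA : Summable (fun k : ℕ => A ^ (B + k) / ((B + k).factorial : ℝ)) :=
    (Real.summable_pow_div_factorial A).comp_injective (add_right_injective B)
  have hsB : Summable (fun k : ℕ => (B:ℝ) ^ (B + k) / ((B + k).factorial : ℝ)) :=
    (Real.summable_pow_div_factorial B).comp_injective (add_right_injective B)
  have key : ∀ k : ℕ, A ^ (B + k) / ((B + k).factorial : ℝ)
      ≤ (A / B) ^ B * ((B:ℝ) ^ (B + k) / ((B + k).factorial : ℝ)) := by
    intro k
    rw [div_pow, mul_div_assoc']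
    gcongr ?_ / _
    have h2 : A ^ B / (B:ℝ) ^ B * (B:ℝ) ^ (B + k) = A ^ B * (B:ℝ) ^ k := by
      rw [pow_add]; field_simp
    rw [h2, pow_add]
    exact mul_le_mul_of_nonneg_left (pow_le_pow_left₀ hA.le hAB.le k) (by positivity)
  calc ∑' k : ℕ, A ^ (B + k) / ((B + k).factorial : ℝ)
      ≤ ∑' k : ℕ, (A / B) ^ B * ((B:ℝ) ^ (B + k) / ((B + k).factorial : ℝ)) :=
        Summable.tsum_le_tsum key hsA (hsB.mul_left _)
    _ = (A / B) ^ B * ∑' k : ℕ, (B:ℝ) ^ (B + k) / ((B + k).factorial : ℝ) :=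
        tsum_mul_left
    _ ≤ (A / B) ^ B * ∑' n : ℕ, (B:ℝ) ^ n / (n.factorial : ℝ) := by
        apply mul_le_mul_of_nonneg_left _ (by positivity)
        refine Summable.tsum_le_tsum_of_inj (fun k => B + k) (add_right_injective B)
          (fun c _ => by positivity) (fun b => le_refl _) hsB
          (Real.summable_pow_div_factorial B)
    _ = (A / B) ^ B * Real.exp B := by
        rw [Real.exp_eq_exp_ℝ, NormedSpace.exp_eq_tsum_div]
    _ = (A * Real.exp 1 / B) ^ B := by
        rw [show ((B:ℝ)) = (B:ℕ) * (1:ℝ) by push_cast; ring, Real.exp_nat_mul,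
          mul_div_right_comm, mul_pow]
end

section
/- Let X and X' be independent random vectors (in some product space) and let U = g(X, X') be square-integrable. Then Var(E[U | X]) ≤ E[Var(U | X')]. -/
/-!
Let `f = E[U | X]`, `h = E[U | X']` and `M = E[U]`. Since `h` is a function of `X'`, which is
independent of `X`, we have `E[h | X] = M`, so `E[U - h | X] = f - M`. Conditional expectation
does not increase variance (law of total variance), hence
`Var(f) = Var(E[U - h | X]) ≤ Var(U - h) ≤ E[(U - h)²] = E[Var(U | X')]`.
-/

open MeasureTheory ProbabilityTheory

namespace ProbabilityTheory

variable {Ω : Type*} {m₀ m₁ m₂ : MeasurableSpace Ω} {μ : Measure[m₀] Ω} {X : Ω → ℝ}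

lemma variance_condExp_le_variance [IsProbabilityMeasure μ] (hm : m₁ ≤ m₀) (hX : MemLp X 2 μ) :
    Var[μ[X | m₁]; μ] ≤ Var[X; μ] := by
  rw [← integral_condVar_add_variance_condExp hm hX]
  have h_nonneg : 0 ≤ μ[Var[X; μ | m₁]] :=
    integral_nonneg_of_ae <| condExp_nonneg <| ae_of_all _ fun ω => sq_nonneg _
  linarith

lemma condExp_sub_condExp_ae_eq_of_indep [IsProbabilityMeasure μ] (hm₁ : m₁ ≤ m₀)
    (hm₂ : m₂ ≤ m₀) (hind : Indep m₁ m₂ μ) (hX : Integrable X μ) :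
    μ[X - μ[X | m₂] | m₁] =ᵐ[μ] fun ω => (μ[X | m₁]) ω - μ[X] := by
  filter_upwards [condExp_sub hX integrable_condExp m₁,
    condExp_indep_eq hm₂ hm₁ (stronglyMeasurable_condExp (f := X)) hind.symm] with ω h_sub h_indep
  rw [h_sub, Pi.sub_apply, h_indep, integral_condExp hm₂]

theorem variance_condExp_le_integral_condVar_of_indep [IsProbabilityMeasure μ] (hm₁ : m₁ ≤ m₀)
    (hm₂ : m₂ ≤ m₀) (hind : Indep m₁ m₂ μ) (hX : MemLp X 2 μ) :
    Var[μ[X | m₁]; μ] ≤ μ[Var[X; μ | m₂]] := by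
  have h_res : MemLp (X - μ[X | m₂]) 2 μ := hX.sub (hX.condExp one_le_two)
  calc Var[μ[X | m₁]; μ]
      = Var[fun ω => (μ[X | m₁]) ω - μ[X]; μ] :=
        (variance_sub_const integrable_condExp.aestronglyMeasurable _).symm
    _ = Var[μ[X - μ[X | m₂] | m₁]; μ] :=
        variance_congr (condExp_sub_condExp_ae_eq_of_indep hm₁ hm₂ hind
          (hX.integrable one_le_two)).symm
    _ ≤ Var[X - μ[X | m₂]; μ] := variance_condExp_le_variance hm₁ h_res
    _ ≤ μ[(X - μ[X | m₂]) ^ 2] := variance_le_expectation_sq h_res.aestronglyMeasurable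
    _ = μ[Var[X; μ | m₂]] := (integral_condExp hm₂).symm

end ProbabilityTheory

theorem variance_condexp_le_expectation_condVar_general {Ω 𝒳 𝒴 : Type*} [MeasurableSpace Ω]
    [m𝒳 : MeasurableSpace 𝒳] [m𝒴 : MeasurableSpace 𝒴] {μ : Measure Ω} [IsProbabilityMeasure μ]
    (X : Ω → 𝒳) (X' : Ω → 𝒴) (hX : Measurable X) (hX' : Measurable X')
    (hindep : IndepFun X X' μ)
    (U : Ω → ℝ) (hU : MemLp U 2 μ) :
    variance (μ[U | MeasurableSpace.comap X m𝒳]) μ ≤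
      ∫ ω, (μ[(fun ω' => (U ω' - (μ[U | MeasurableSpace.comap X' m𝒴]) ω') ^ 2)
          | MeasurableSpace.comap X' m𝒴]) ω ∂μ :=
  variance_condExp_le_integral_condVar_of_indep hX.comap_le hX'.comap_le
    ((IndepFun_iff_Indep X X' μ).1 hindep) hU

/-- If `X` and `X'` are independent and `U = g(X, X')` is square-integrable, then
`Var(E[U | X]) ≤ E[Var(U | X')]`. -/
theorem variance_condexp_le_expectation_condVar {Ω 𝒳 𝒴 : Type*} [MeasurableSpace Ω]
    [m𝒳 : MeasurableSpace 𝒳] [m𝒴 : MeasurableSpace 𝒴] {μ : Measure Ω} [IsProbabilityMeasure μ]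
    (X : Ω → 𝒳) (X' : Ω → 𝒴) (hX : Measurable X) (hX' : Measurable X')
    (hindep : IndepFun X X' μ) (g : 𝒳 → 𝒴 → ℝ) (hg : Measurable (Function.uncurry g))
    (U : Ω → ℝ) (hUdef : U = fun ω => g (X ω) (X' ω)) (hU : MemLp U 2 μ) :
    variance (μ[U | MeasurableSpace.comap X m𝒳]) μ ≤
      ∫ ω, (μ[(fun ω' => (U ω' - (μ[U | MeasurableSpace.comap X' m𝒴]) ω') ^ 2)
          | MeasurableSpace.comap X' m𝒴]) ω ∂μ :=
  variance_condexp_le_expectation_condVar_general (m𝒳 := m𝒳) (m𝒴 := m𝒴) X X' hX hX' hindep U hU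
end
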